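/- For the standard normal CDF Φ and fixed d > 0, the function t ↦ Φ(d−t)/Φ(−t), the ratio of upper-tail probabilities of N(d,1) and N(0,1) at threshold t, is strictly increasing in t and tends to +∞ as t → +∞. -/

import Mathlib

/-!
Exponential tilting: `φ (y + d) = φ y * exp (-(d * y + d ^ 2 / 2))`, and for `d > 0` the weight
decreases in `y`, so `Φ (x + d) = ∫_{y < x} φ (y + d) dy > exp (-(d * x + d ^ 2 / 2)) * Φ x`.
This one inequality gives both claims for `x = -t`: it is the sign of the derivative of
`x ↦ Φ (x + d) / Φ x`, whose numerator is `φ x * (exp (-(d * x + d ^ 2 / 2)) * Φ x - Φ (x + d))`,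
and it bounds the ratio below by `exp (-(d * x + d ^ 2 / 2))`, which tends to `∞` as `x → -∞`.
-/

open MeasureTheory ProbabilityTheory Filter

noncomputable def stdNormalCDF (x : ℝ) : ℝ := (gaussianReal 0 1 (Set.Iic x)).toReal

open Real Set

local notation "φ" => gaussianPDFReal 0 1

theorem setIntegral_pos_of_forall_pos {X : Type*} [MeasurableSpace X] {μ : Measure X}
    {s : Set X} {f : X → ℝ} (hs : MeasurableSet s) (hμs : μ s ≠ 0) (hf : IntegrableOn f s μ)
    (hpos : ∀ x ∈ s, 0 < f x) : 0 < ∫ x in s, f x ∂μ := by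
  have hsupp : Function.support f ∩ s = s := inter_eq_right.mpr fun x hx => (hpos x hx).ne'
  rw [setIntegral_pos_iff_support_of_nonneg_ae
    (ae_restrict_of_forall_mem hs fun x hx => (hpos x hx).le) hf, hsupp]
  exact pos_iff_ne_zero.mpr hμs

theorem gaussianPDFReal_add_eq_mul_exp (μ : ℝ) (v : NNReal) (x d : ℝ) :
    gaussianPDFReal μ v (x + d) =
      gaussianPDFReal μ v x * exp (-(d * (x - μ) + d ^ 2 / 2) / v) := by
  simp only [gaussianPDFReal, mul_assoc, ← exp_add]
  ring_nf

theorem stdNormalCDF_eq_integral (x : ℝ) : stdNormalCDF x = ∫ y in Iio x, φ y := by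
  rw [stdNormalCDF, gaussianReal_apply_eq_integral 0 one_ne_zero,
    ENNReal.toReal_ofReal (integral_nonneg fun y => gaussianPDFReal_nonneg 0 1 y),
    integral_Iic_eq_integral_Iio]

theorem stdNormalCDF_add_eq_integral (x d : ℝ) :
    stdNormalCDF (x + d) = ∫ y in Iio x, φ (y + d) := by
  rw [stdNormalCDF_eq_integral, ← (measurePreserving_add_right volume d).setIntegral_preimage_emb
    (measurableEmbedding_addRight d), preimage_add_const_Iio, add_sub_cancel_right]

theorem stdNormalCDF_pos (x : ℝ) : 0 < stdNormalCDF x := by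
  rw [stdNormalCDF_eq_integral]
  exact setIntegral_pos_of_forall_pos measurableSet_Iio (by simp [Real.volume_Iio])
    (integrable_gaussianPDFReal 0 1).integrableOn fun y _ => gaussianPDFReal_pos 0 1 y one_ne_zero

theorem hasDerivAt_stdNormalCDF (x : ℝ) : HasDerivAt stdNormalCDF (φ x) x := by
  have hint := integrable_gaussianPDFReal 0 1
  have hcont : Continuous φ := by rw [gaussianPDFReal_def]; fun_prop
  have hsplit : stdNormalCDF = fun u => stdNormalCDF 0 + ∫ y in (0 : ℝ)..u, φ y := by
    ext u
    simp only [stdNormalCDF_eq_integral, ← integral_Iic_eq_integral_Iio,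
      ← intervalIntegral.integral_Iic_sub_Iic hint.integrableOn hint.integrableOn]
    ring
  rw [hsplit]
  exact (intervalIntegral.integral_hasDerivAt_right hint.intervalIntegrable
    (hcont.stronglyMeasurableAtFilter _ _) hcont.continuousAt).const_add _

theorem exp_mul_stdNormalCDF_lt_stdNormalCDF_add {d : ℝ} (hd : 0 < d) (x : ℝ) :
    exp (-(d * x + d ^ 2 / 2)) * stdNormalCDF x < stdNormalCDF (x + d) := by
  have hφ := integrable_gaussianPDFReal 0 1
  rw [stdNormalCDF_eq_integral, stdNormalCDF_add_eq_integral, ← integral_const_mul, ← sub_pos,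
    ← integral_sub (hφ.comp_add_right d).integrableOn (hφ.const_mul _).integrableOn]
  refine setIntegral_pos_of_forall_pos measurableSet_Iio (by simp [Real.volume_Iio])
    ((hφ.comp_add_right d).sub (hφ.const_mul _)).integrableOn fun y (hy : y < x) => ?_
  have htilt : φ (y + d) = φ y * exp (-(d * y + d ^ 2 / 2)) := by
    simpa using gaussianPDFReal_add_eq_mul_exp 0 1 y d
  have hexp : exp (-(d * x + d ^ 2 / 2)) < exp (-(d * y + d ^ 2 / 2)) :=
    exp_lt_exp.mpr (by nlinarith)
  rw [htilt, sub_pos, mul_comm]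
  exact mul_lt_mul_of_pos_left hexp (gaussianPDFReal_pos 0 1 y one_ne_zero)

theorem strictAnti_stdNormalCDF_add_div {d : ℝ} (hd : 0 < d) :
    StrictAnti fun x => stdNormalCDF (x + d) / stdNormalCDF x := by
  have hnum : ∀ x, HasDerivAt (fun x => stdNormalCDF (x + d)) (φ (x + d)) x := fun x =>
    (hasDerivAt_stdNormalCDF (x + d)).comp_add_const x d
  refine strictAnti_of_hasDerivAt_neg (fun x => (hnum x).div (hasDerivAt_stdNormalCDF x)
    (stdNormalCDF_pos x).ne') fun x => div_neg_of_neg_of_pos ?_ (pow_pos (stdNormalCDF_pos x) 2)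
  have htilt : φ (x + d) = φ x * exp (-(d * x + d ^ 2 / 2)) := by
    simpa using gaussianPDFReal_add_eq_mul_exp 0 1 x d
  have hnumerator : φ (x + d) * stdNormalCDF x - stdNormalCDF (x + d) * φ x =
      φ x * (exp (-(d * x + d ^ 2 / 2)) * stdNormalCDF x - stdNormalCDF (x + d)) := by
    rw [htilt]
    ring
  rw [hnumerator]
  exact mul_neg_of_pos_of_neg (gaussianPDFReal_pos 0 1 x one_ne_zero)
    (sub_neg.mpr (exp_mul_stdNormalCDF_lt_stdNormalCDF_add hd x))

theorem tendsto_stdNormalCDF_add_div_atBot {d : ℝ} (hd : 0 < d) :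
    Tendsto (fun x => stdNormalCDF (x + d) / stdNormalCDF x) atBot atTop := by
  refine tendsto_atTop_mono (fun x => (le_div_iff₀ (stdNormalCDF_pos x)).mpr
    (exp_mul_stdNormalCDF_lt_stdNormalCDF_add hd x).le) ?_
  exact tendsto_exp_atTop.comp <| tendsto_neg_atBot_atTop.comp <|
    tendsto_atBot_add_const_right _ _ (tendsto_id.const_mul_atBot hd)

/-- For fixed `d > 0`, the ratio of the upper-tail probabilities of `N(d,1)` and `N(0,1)`,
`t ↦ Φ(d−t)/Φ(−t)`, is strictly increasing in `t` and tends to `+∞` as `t → +∞`. -/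
theorem tail_ratio_strictMono_and_tendsto_atTop (d : ℝ) (hd : 0 < d) :
    StrictMono (fun t : ℝ => stdNormalCDF (d - t) / stdNormalCDF (-t)) ∧
    Tendsto (fun t : ℝ => stdNormalCDF (d - t) / stdNormalCDF (-t)) atTop atTop := by
  simp only [sub_eq_neg_add]
  exact ⟨(strictAnti_stdNormalCDF_add_div hd).comp fun _ _ => neg_lt_neg,
    (tendsto_stdNormalCDF_add_div_atBot hd).comp tendsto_neg_atTop_atBot⟩
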